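/- arXiv:2012.12525 — 5 statements merged into one kernel-verified Lean document; each statement's English description precedes it below -/
import Mathlib

section
/- Let u: ℝ × ℝ → ℝ be smooth and 1-periodic in the second variable, and suppose u satisfies the single-cycle pulse equation u_{xt}(t,x) = u(t,x) + ½ u(t,x) (u²)_{xx}(t,x) for all t ≥ 0 and x ∈ ℝ. Then the energy E(t) := ∫₀¹ uₓ²(t,x) dx is constant in time, and moreover F(t) := ∫₀¹ (u − u uₓ²)(t,x) dx = 0 for every t ≥ 0. -/
open MeasureTheory Filter Set Function

noncomputable section

namespace SCPAux

/-- partial derivative in the second (space) variable -/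
def pdx (F : ℝ → ℝ → ℝ) (t x : ℝ) : ℝ := fderiv ℝ (uncurry F) (t, x) (0, 1)

/-- partial derivative in the first (time) variable -/
def pdt (F : ℝ → ℝ → ℝ) (t x : ℝ) : ℝ := fderiv ℝ (uncurry F) (t, x) (1, 0)

variable {F : ℝ → ℝ → ℝ}

lemma hasDerivAt_pdx (hF : Differentiable ℝ (uncurry F)) (t x : ℝ) :
    HasDerivAt (fun z => F t z) (pdx F t x) x := by
  have h1 : HasDerivAt (fun z : ℝ => (t, z)) ((0 : ℝ), (1 : ℝ)) x :=
    HasDerivAt.prodMk (hasDerivAt_const x t) (hasDerivAt_id x)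
  exact (hF (t, x)).hasFDerivAt.comp_hasDerivAt x h1

lemma hasDerivAt_pdt (hF : Differentiable ℝ (uncurry F)) (t x : ℝ) :
    HasDerivAt (fun s => F s x) (pdt F t x) t := by
  have h1 : HasDerivAt (fun s : ℝ => (s, x)) ((1 : ℝ), (0 : ℝ)) t :=
    HasDerivAt.prodMk (hasDerivAt_id t) (hasDerivAt_const t x)
  exact (hF (t, x)).hasFDerivAt.comp_hasDerivAt t h1

lemma contDiff_uncurry_pdx (hF : ContDiff ℝ (⊤ : ℕ∞) (uncurry F)) :
    ContDiff ℝ (⊤ : ℕ∞) (uncurry (pdx F)) :=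
  ((ContinuousLinearMap.apply ℝ ℝ (((0 : ℝ), (1 : ℝ)) : ℝ × ℝ)).contDiff).comp
    (hF.fderiv_right (by simp))

lemma contDiff_uncurry_pdt (hF : ContDiff ℝ (⊤ : ℕ∞) (uncurry F)) :
    ContDiff ℝ (⊤ : ℕ∞) (uncurry (pdt F)) :=
  ((ContinuousLinearMap.apply ℝ ℝ (((1 : ℝ), (0 : ℝ)) : ℝ × ℝ)).contDiff).comp
    (hF.fderiv_right (by simp))

lemma pdx_pdt_eq_pdt_pdx (hF : ContDiff ℝ (⊤ : ℕ∞) (uncurry F)) (t x : ℝ) :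
    pdx (pdt F) t x = pdt (pdx F) t x := by
  set f := uncurry F with hfdef
  have hfd : Differentiable ℝ f := hF.differentiable (by simp)
  have hf' : ∀ p, HasFDerivAt f (fderiv ℝ f p) p := fun p => (hfd p).hasFDerivAt
  have hf'' : HasFDerivAt (fderiv ℝ f) (fderiv ℝ (fderiv ℝ f) (t, x)) (t, x) :=
    (((hF.fderiv_right (m := (⊤ : ℕ∞)) (by simp)).differentiable (by simp)) (t, x)).hasFDerivAt
  have hsymm := second_derivative_symmetric hf' hf''
  have h1 : HasFDerivAt (uncurry (pdt F))
      ((ContinuousLinearMap.apply ℝ ℝ (((1:ℝ),(0:ℝ)) : ℝ × ℝ)).comp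
        (fderiv ℝ (fderiv ℝ f) (t, x))) (t, x) :=
    (ContinuousLinearMap.apply ℝ ℝ (((1:ℝ),(0:ℝ)) : ℝ × ℝ)).hasFDerivAt.comp (t, x) hf''
  have h2 : HasFDerivAt (uncurry (pdx F))
      ((ContinuousLinearMap.apply ℝ ℝ (((0:ℝ),(1:ℝ)) : ℝ × ℝ)).comp
        (fderiv ℝ (fderiv ℝ f) (t, x))) (t, x) :=
    (ContinuousLinearMap.apply ℝ ℝ (((0:ℝ),(1:ℝ)) : ℝ × ℝ)).hasFDerivAt.comp (t, x) hf''
  have e1 : pdx (pdt F) t x = fderiv ℝ (fderiv ℝ f) (t, x) (0, 1) (1, 0) := by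
    show fderiv ℝ (uncurry (pdt F)) (t, x) (0, 1) = _
    rw [h1.fderiv]; rfl
  have e2 : pdt (pdx F) t x = fderiv ℝ (fderiv ℝ f) (t, x) (1, 0) (0, 1) := by
    show fderiv ℝ (uncurry (pdx F)) (t, x) (1, 0) = _
    rw [h2.fderiv]; rfl
  rw [e1, e2, hsymm]

lemma pdx_periodic (hF : Differentiable ℝ (uncurry F)) (hper : ∀ t x, F t (x + 1) = F t x)
    (t x : ℝ) : pdx F t (x + 1) = pdx F t x := by
  rw [← (hasDerivAt_pdx hF t (x + 1)).deriv, ← (hasDerivAt_pdx hF t x).deriv]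
  rw [← deriv_comp_add_const (fun z => F t z) 1 x]
  congr 1
  exact funext fun z => hper t z

lemma pdt_periodic (hF : Differentiable ℝ (uncurry F)) (hper : ∀ t x, F t (x + 1) = F t x)
    (t x : ℝ) : pdt F t (x + 1) = pdt F t x := by
  rw [← (hasDerivAt_pdt hF t (x + 1)).deriv, ← (hasDerivAt_pdt hF t x).deriv]
  congr 1
  exact funext fun s => hper s x

end SCPAux

open SCPAux in
/-- **Conservation laws for smooth solutions of the single-cycle pulse equation.**
If `u : ℝ × ℝ → ℝ` is smooth, 1-periodic in the second variable, and satisfies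
`u_{xt} = u + ½ u (u²)_{xx}` (with `u_{xt} = ∂ₜ∂ₓu`) for all `t ≥ 0` and `x ∈ ℝ`, then
`E(t) = ∫₀¹ uₓ²(t,x) dx` is constant in time, and `F(t) = ∫₀¹ (u − u uₓ²)(t,x) dx = 0`
for every `t ≥ 0`. -/
theorem smooth_single_cycle_pulse_conservation
    (u : ℝ → ℝ → ℝ)
    (hsmooth : ContDiff ℝ (⊤ : ℕ∞) (Function.uncurry u))
    (hper : ∀ t x : ℝ, u t (x + 1) = u t x)
    (hpde : ∀ t x : ℝ, 0 ≤ t →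
      deriv (fun s => deriv (fun z => u s z) x) t
        = u t x + (1/2) * u t x * deriv (fun z => deriv (fun w => (u t w) ^ 2) z) x) :
    (∀ t : ℝ, 0 ≤ t →
      (∫ x in (0:ℝ)..1, (deriv (fun z => u t z) x) ^ 2)
        = ∫ x in (0:ℝ)..1, (deriv (fun z => u 0 z) x) ^ 2) ∧
    (∀ t : ℝ, 0 ≤ t →
      (∫ x in (0:ℝ)..1, (u t x - u t x * (deriv (fun z => u t z) x) ^ 2)) = 0) := by
  have hud : Differentiable ℝ (uncurry u) := hsmooth.differentiable (by simp)
  have hux_cd : ContDiff ℝ (⊤ : ℕ∞) (uncurry (pdx u)) := contDiff_uncurry_pdx hsmooth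
  have huxd : Differentiable ℝ (uncurry (pdx u)) := hux_cd.differentiable (by simp)
  have hut_cd : ContDiff ℝ (⊤ : ℕ∞) (uncurry (pdt u)) := contDiff_uncurry_pdt hsmooth
  have hutd : Differentiable ℝ (uncurry (pdt u)) := hut_cd.differentiable (by simp)
  have huxx_cd : ContDiff ℝ (⊤ : ℕ∞) (uncurry (pdx (pdx u))) := contDiff_uncurry_pdx hux_cd
  have huxt_cd : ContDiff ℝ (⊤ : ℕ∞) (uncurry (pdt (pdx u))) := contDiff_uncurry_pdt hux_cd
  have hutx_d : Differentiable ℝ (uncurry (pdx (pdt u))) :=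
    (contDiff_uncurry_pdx hut_cd).differentiable (by simp)
  -- deriv in the statement equals pdx
  have hderiv_eq : ∀ t x : ℝ, deriv (fun z => u t z) x = pdx u t x :=
    fun t x => (hasDerivAt_pdx hud t x).deriv
  -- continuity of slices
  have hcu : ∀ t : ℝ, Continuous (fun x => u t x) :=
    fun t => hsmooth.continuous.comp (Continuous.prodMk_right t)
  have hcux : ∀ t : ℝ, Continuous (fun x => pdx u t x) :=
    fun t => hux_cd.continuous.comp (Continuous.prodMk_right t)
  have hcut : ∀ t : ℝ, Continuous (fun x => pdt u t x) :=
    fun t => hut_cd.continuous.comp (Continuous.prodMk_right t)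
  -- rewrite the PDE
  have hpde' : ∀ t x : ℝ, 0 ≤ t →
      pdt (pdx u) t x
        = u t x + u t x * (pdx u t x) ^ 2 + (u t x) ^ 2 * pdx (pdx u) t x := by
    intro t x ht
    have h0 := hpde t x ht
    have hL : deriv (fun s => deriv (fun z => u s z) x) t = pdt (pdx u) t x := by
      have he : (fun s => deriv (fun z => u s z) x) = fun s => pdx u s x :=
        funext fun s => hderiv_eq s x
      rw [he, (hasDerivAt_pdt huxd t x).deriv]
    have hsq : ∀ z : ℝ, deriv (fun w => (u t w) ^ 2) z = 2 * (u t z * pdx u t z) := by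
      intro z
      rw [((hasDerivAt_pdx hud t z).fun_pow 2).deriv]; ring
    have h2 : deriv (fun z => deriv (fun w => (u t w) ^ 2) z) x
        = 2 * (pdx u t x * pdx u t x + u t x * pdx (pdx u) t x) := by
      have he : (fun z => deriv (fun w => (u t w) ^ 2) z)
          = fun z => 2 * (u t z * pdx u t z) := funext hsq
      rw [he]
      have hd : HasDerivAt (fun z => 2 * (u t z * pdx u t z))
          (2 * (pdx u t x * pdx u t x + u t x * pdx (pdx u) t x)) x := by
        have h := ((hasDerivAt_pdx hud t x).fun_mul (hasDerivAt_pdx huxd t x)).const_mul 2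
        convert h using 1
      rw [hd.deriv]
    rw [hL, h2] at h0
    rw [h0]; ring
  constructor
  · -- energy conservation
    intro t ht
    simp only [hderiv_eq]
    -- FTC in time at each x
    have hftc_t : ∀ x : ℝ, (pdx u t x) ^ 2 - (pdx u 0 x) ^ 2
        = ∫ s in (0:ℝ)..t, 2 * pdx u s x * pdt (pdx u) s x := by
      intro x
      have h : ∀ s ∈ uIcc (0:ℝ) t, HasDerivAt (fun s => (pdx u s x) ^ 2)
          (2 * pdx u s x * pdt (pdx u) s x) s := by
        intro s _
        simpa using (hasDerivAt_pdt huxd s x).fun_pow 2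
      have hint : IntervalIntegrable (fun s => 2 * pdx u s x * pdt (pdx u) s x)
          volume 0 t := by
        apply Continuous.intervalIntegrable
        exact (continuous_const.mul
            (hux_cd.continuous.comp (continuous_id.prodMk continuous_const))).mul
          (huxt_cd.continuous.comp (continuous_id.prodMk continuous_const))
      rw [intervalIntegral.integral_eq_sub_of_hasDerivAt h hint]
    -- each time slice integrates to zero in x
    have hftc_x : ∀ s : ℝ, 0 ≤ s →
        (∫ x in (0:ℝ)..1, 2 * pdx u s x * pdt (pdx u) s x) = 0 := by
      intro s hs
      have hP : ∀ x : ℝ, HasDerivAt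
          (fun z => (u s z) ^ 2 + (u s z) ^ 2 * (pdx u s z) ^ 2)
          (2 * pdx u s x * pdt (pdx u) s x) x := by
        intro x
        have h1 := (hasDerivAt_pdx hud s x).fun_pow 2
        have h2 := ((hasDerivAt_pdx hud s x).fun_pow 2).fun_mul
          ((hasDerivAt_pdx huxd s x).fun_pow 2)
        have h3 := h1.fun_add h2
        refine h3.congr_deriv ?_
        rw [hpde' s x hs]; ring
      have hint : IntervalIntegrable (fun x => 2 * pdx u s x * pdt (pdx u) s x)
          volume 0 1 := by
        apply Continuous.intervalIntegrable
        exact (continuous_const.mul (hcux s)).mul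
          (huxt_cd.continuous.comp (Continuous.prodMk_right s))
      rw [intervalIntegral.integral_eq_sub_of_hasDerivAt (fun x _ => hP x) hint]
      have h1 : (1:ℝ) = 0 + 1 := by ring
      rw [h1, hper s 0, pdx_periodic hud hper s 0]
      ring
    -- Fubini
    have hswap : (∫ x in (0:ℝ)..1, ∫ s in (0:ℝ)..t, 2 * pdx u s x * pdt (pdx u) s x)
        = ∫ s in (0:ℝ)..t, ∫ x in (0:ℝ)..1, 2 * pdx u s x * pdt (pdx u) s x := by
      simp only [intervalIntegral.integral_of_le ht,
        intervalIntegral.integral_of_le (zero_le_one : (0:ℝ) ≤ 1)]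
      apply MeasureTheory.integral_integral_swap
      rw [Measure.prod_restrict]
      have hcont : Continuous (uncurry fun (x s : ℝ) => 2 * pdx u s x * pdt (pdx u) s x) := by
        have : Continuous (fun p : ℝ × ℝ => 2 * pdx u p.2 p.1 * pdt (pdx u) p.2 p.1) := by
          exact (continuous_const.mul (hux_cd.continuous.comp continuous_swap)).mul
            (huxt_cd.continuous.comp continuous_swap)
        exact this
      have hsub : Ioc (0:ℝ) 1 ×ˢ Ioc (0:ℝ) t ⊆ Icc (0:ℝ) 1 ×ˢ Icc (0:ℝ) t :=
        Set.prod_mono Ioc_subset_Icc_self Ioc_subset_Icc_self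
      apply MeasureTheory.IntegrableOn.mono_set _ hsub
      exact hcont.continuousOn.integrableOn_compact (isCompact_Icc.prod isCompact_Icc)
    have key : (∫ x in (0:ℝ)..1, ((pdx u t x) ^ 2 - (pdx u 0 x) ^ 2)) = 0 := by
      have he : EqOn (fun x => (pdx u t x) ^ 2 - (pdx u 0 x) ^ 2)
          (fun x => ∫ s in (0:ℝ)..t, 2 * pdx u s x * pdt (pdx u) s x) (uIcc (0:ℝ) 1) :=
        fun x _ => hftc_t x
      rw [intervalIntegral.integral_congr he, hswap]
      have hz : EqOn (fun s => ∫ x in (0:ℝ)..1, 2 * pdx u s x * pdt (pdx u) s x)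
          (fun _ => (0:ℝ)) (uIcc (0:ℝ) t) := by
        intro s hs
        rw [uIcc_of_le ht] at hs
        exact hftc_x s hs.1
      rw [intervalIntegral.integral_congr hz]
      simp
    have hi1 : IntervalIntegrable (fun x => (pdx u t x) ^ 2) volume 0 1 :=
      ((hcux t).pow 2).intervalIntegrable 0 1
    have hi0 : IntervalIntegrable (fun x => (pdx u 0 x) ^ 2) volume 0 1 :=
      ((hcux 0).pow 2).intervalIntegrable 0 1
    rw [intervalIntegral.integral_sub hi1 hi0] at key
    linarith
  · -- the second conserved quantity
    intro t ht
    simp only [hderiv_eq]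
    have hQ : ∀ x : ℝ, HasDerivAt (fun z => pdt u t z - (u t z) ^ 2 * pdx u t z)
        (u t x - u t x * (pdx u t x) ^ 2) x := by
      intro x
      have h1 : HasDerivAt (fun z => pdt u t z) (pdx (pdt u) t x) x :=
        hasDerivAt_pdx hutd t x
      have h2 := ((hasDerivAt_pdx hud t x).fun_pow 2).fun_mul (hasDerivAt_pdx huxd t x)
      have h3 := h1.fun_sub h2
      refine h3.congr_deriv ?_
      rw [pdx_pdt_eq_pdt_pdx hsmooth t x, hpde' t x ht]; ring
    have hint : IntervalIntegrable (fun x => u t x - u t x * (pdx u t x) ^ 2)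
        volume 0 1 :=
      ((hcu t).sub ((hcu t).mul ((hcux t).pow 2))).intervalIntegrable 0 1
    rw [intervalIntegral.integral_eq_sub_of_hasDerivAt (fun x _ => hQ x) hint]
    have h1 : (1:ℝ) = 0 + 1 := by ring
    rw [h1, hper t 0, pdx_periodic hud hper t 0, pdt_periodic hud hper t 0]
    ring
end
end

section
/- Let p, U: [0,∞) → ℝ be continuous, and suppose V, W: [0,∞) → ℝ are differentiable and satisfy the ordinary differential equations V'(t) = −2U(t)W(t) + 2W(t)V(t)p(t) and W'(t) = 2U(t)V(t) − U(t) − 2V(t)²p(t) + V(t)p(t) for all t ≥ 0, together with the initial constraint W(0)² + V(0)² = V(0). Then W(t)² + V(t)² = V(t) for all t ≥ 0; consequently 0 ≤ V(t) ≤ 1 and |W(t)| ≤ 1/2 for all t ≥ 0. -/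
open Set


/-!
Writing `a = U - V p`, the system reads `V' = -2 W a`, `W' = (2V - 1) a`: the vector field
`(V', W')` is `a` times the rotation of the radius vector `(V - 1/2, W)`. Hence the
derivative of `W² + (V - 1/2)²` vanishes, the circle `W² + V² = V` is invariant, and points of
this circle (of centre `(1/2, 0)` and radius `1/2`) satisfy `0 ≤ V ≤ 1` and `|W| ≤ 1/2`.
-/

theorem Convex.eq_of_hasDerivWithinAt_zero {E : Type*} [NormedAddCommGroup E] [NormedSpace ℝ E]
    {f : ℝ → E} {s : Set ℝ} (hs : Convex ℝ s) (hf : ∀ x ∈ s, HasDerivWithinAt f 0 s x)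
    {x y : ℝ} (hx : x ∈ s) (hy : y ∈ s) : f y = f x := by
  have h := hs.norm_image_sub_le_of_norm_hasDerivWithin_le hf (fun _ _ => norm_zero.le) hx hy
  rwa [zero_mul, norm_le_zero_iff, sub_eq_zero] at h

theorem hasDerivWithinAt_sq_add_sq_sub_zero {V W : ℝ → ℝ} {a : ℝ} {s : Set ℝ} {t : ℝ}
    (hV : HasDerivWithinAt V (-2 * W t * a) s t)
    (hW : HasDerivWithinAt W ((2 * V t - 1) * a) s t) :
    HasDerivWithinAt (fun τ => W τ ^ 2 + V τ ^ 2 - V τ) 0 s t :=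
  (((hW.pow 2).add (hV.pow 2)).sub hV).congr_deriv (by ring)

theorem bounds_of_sq_add_sq_eq_self {v w : ℝ} (h : w ^ 2 + v ^ 2 = v) :
    0 ≤ v ∧ v ≤ 1 ∧ |w| ≤ 1 / 2 := by
  refine ⟨by nlinarith [sq_nonneg w, sq_nonneg v], by nlinarith [sq_nonneg w, sq_nonneg v], ?_⟩
  rw [abs_le]
  constructor <;> nlinarith [sq_nonneg (v - 1 / 2)]

theorem semilinear_VW_invariant_general
    (p U V W : ℝ → ℝ)
    (hV : ∀ t : ℝ, 0 ≤ t → HasDerivWithinAt V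
      (-2 * U t * W t + 2 * W t * V t * p t) (Set.Ici (0:ℝ)) t)
    (hW : ∀ t : ℝ, 0 ≤ t → HasDerivWithinAt W
      (2 * U t * V t - U t - 2 * (V t) ^ 2 * p t + V t * p t) (Set.Ici (0:ℝ)) t)
    (hinit : (W 0) ^ 2 + (V 0) ^ 2 = V 0) :
    ∀ t : ℝ, 0 ≤ t →
      ((W t) ^ 2 + (V t) ^ 2 = V t ∧ 0 ≤ V t ∧ V t ≤ 1 ∧ |W t| ≤ 1/2) := by
  have hconst : ∀ t ∈ Ici (0 : ℝ), W t ^ 2 + V t ^ 2 - V t = W 0 ^ 2 + V 0 ^ 2 - V 0 :=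
    fun t ht => (convex_Ici 0).eq_of_hasDerivWithinAt_zero
      (fun τ hτ => hasDerivWithinAt_sq_add_sq_sub_zero (a := U τ - V τ * p τ)
        ((hV τ hτ).congr_deriv (by ring)) ((hW τ hτ).congr_deriv (by ring)))
      self_mem_Ici ht
  intro t ht
  have hcircle : W t ^ 2 + V t ^ 2 = V t := by linarith [hconst t ht]
  exact ⟨hcircle, bounds_of_sq_add_sq_eq_self hcircle⟩

/-- **The invariant `W² + V² = V` of the semilinear system.** If `p, U` are continuous
on `[0,∞)`, and `V, W` are differentiable on `[0,∞)` with
`V' = −2UW + 2WVp` and `W' = 2UV − U − 2V²p + Vp` for all `t ≥ 0`, and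
`W(0)² + V(0)² = V(0)`, then `W(t)² + V(t)² = V(t)` for all `t ≥ 0`; consequently
`0 ≤ V(t) ≤ 1` and `|W(t)| ≤ 1/2` for all `t ≥ 0`. -/
theorem semilinear_VW_invariant
    (p U V W : ℝ → ℝ)
    (hp : ContinuousOn p (Set.Ici (0:ℝ)))
    (hU : ContinuousOn U (Set.Ici (0:ℝ)))
    (hV : ∀ t : ℝ, 0 ≤ t → HasDerivWithinAt V
      (-2 * U t * W t + 2 * W t * V t * p t) (Set.Ici (0:ℝ)) t)
    (hW : ∀ t : ℝ, 0 ≤ t → HasDerivWithinAt W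
      (2 * U t * V t - U t - 2 * (V t) ^ 2 * p t + V t * p t) (Set.Ici (0:ℝ)) t)
    (hinit : (W 0) ^ 2 + (V 0) ^ 2 = V 0) :
    ∀ t : ℝ, 0 ≤ t →
      ((W t) ^ 2 + (V t) ^ 2 = V t ∧ 0 ≤ V t ∧ V t ≤ 1 ∧ |W t| ≤ 1/2) :=
  semilinear_VW_invariant_general p U V W hV hW hinit
end

section
/- Let P: [0,∞) → ℝ be continuous, and let U, V, W, Q: [0,∞) × ℝ → ℝ be C¹ in t and 1-periodic in ξ, with V, W, Q satisfying V_t = −2UW + 2WVP(t), W_t = 2UV − U − 2V²P(t) + VP(t), Q_t = −2WQP(t). Assume in addition that for each t the map ξ ↦ U(t,ξ) is locally absolutely continuous with ∂_ξU(t,ξ) = W(t,ξ)Q(t,ξ) for a.e. ξ. Then the quantity Ẽ(t) := ∫₀¹ (Q − QV)(t,ξ) dξ is constant in time. -/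
open MeasureTheory Set Topology

/-!
Along each characteristic `ξ` the density `Q − QV` evolves by `(Q − QV)_t = 2WQ(U − P)`, so
`Ẽ(t₂) − Ẽ(t₁)` is the time integral of `∫₀¹ 2WQ(U − P) dξ`. Since `WQ = U_ξ`, that flux is
`∫₀¹ ((U − P)²)_ξ dξ`, which vanishes because `U` is 1-periodic. Exchanging the two integrals
is legitimate since the integrand is continuous on a compact rectangle.
-/

theorem ContinuousOn.continuous_uncurry_left {α β γ : Type*} [TopologicalSpace α]
    [TopologicalSpace β] [TopologicalSpace γ] {F : α → β → γ} {s : Set α} {a : α} (ha : a ∈ s)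
    (hF : ContinuousOn (Function.uncurry F) (s ×ˢ univ)) : Continuous (F a) :=
  continuousOn_univ.1 (hF.uncurry_left a ha)

theorem hasDerivAt_of_sub_eq_intervalIntegral {u g : ℝ → ℝ} (hg : Continuous g)
    (hu : ∀ a b, u b - u a = ∫ x in a..b, g x) (x : ℝ) : HasDerivAt u (g x) x := by
  have hu_eq : u = fun y => u 0 + ∫ s in (0 : ℝ)..y, g s := by
    funext y
    linarith [hu 0 y]
  rw [hu_eq]
  exact ((hg.integral_hasStrictDerivAt 0 x).hasDerivAt).const_add _

theorem intervalIntegral_two_mul_mul_sub_const_eq_zero {u g : ℝ → ℝ} (hg : Continuous g)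
    (hu : ∀ a b, u b - u a = ∫ x in a..b, g x) {a b : ℝ} (hab : u b = u a) (c : ℝ) :
    ∫ x in a..b, 2 * g x * (u x - c) = 0 := by
  have hu' := hasDerivAt_of_sub_eq_intervalIntegral hg hu
  have hsq : ∀ x ∈ uIcc a b, HasDerivAt (fun y => (u y - c) ^ 2) (2 * g x * (u x - c)) x := by
    intro x _
    exact (((hu' x).sub_const c).pow 2).congr_deriv (by push_cast; ring)
  have hcont : Continuous fun x => 2 * g x * (u x - c) :=
    (continuous_const.mul hg).mul
      ((continuous_iff_continuousAt.2 fun x => (hu' x).continuousAt).sub continuous_const)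
  rw [intervalIntegral.integral_eq_sub_of_hasDerivAt hsq (hcont.intervalIntegrable a b), hab,
    sub_self]

theorem HasDerivWithinAt.energy_density {q v : ℝ → ℝ} {s : Set ℝ} {t u w p : ℝ}
    (hq : HasDerivWithinAt q (-2 * w * q t * p) s t)
    (hv : HasDerivWithinAt v (-2 * u * w + 2 * w * v t * p) s t) :
    HasDerivWithinAt (fun r => q r - q r * v r) (2 * w * q t * (u - p)) s t :=
  (hq.sub (hq.mul hv)).congr_deriv (by ring)

theorem intervalIntegral_sub_eq_integral_integral_deriv {e e' : ℝ → ℝ → ℝ} {t₁ t₂ a b : ℝ}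
    (he : ∀ ξ ∈ uIcc a b, ∀ t ∈ uIcc t₁ t₂,
      HasDerivWithinAt (fun s => e s ξ) (e' t ξ) (uIcc t₁ t₂) t)
    (he' : ContinuousOn (Function.uncurry e') (uIcc t₁ t₂ ×ˢ uIcc a b)) :
    ∫ ξ in a..b, (e t₂ ξ - e t₁ ξ) = ∫ t in t₁..t₂, ∫ ξ in a..b, e' t ξ := by
  have hftc : ∀ ξ ∈ uIcc a b, e t₂ ξ - e t₁ ξ = ∫ t in t₁..t₂, e' t ξ := by
    intro ξ hξ
    refine (intervalIntegral.integral_eq_sub_of_hasDeriv_right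
      (fun t ht => (he ξ hξ t ht).continuousWithinAt) (fun t ht => ?_)
      ((he'.uncurry_right ξ hξ).intervalIntegrable)).symm
    have hnhds : uIcc t₁ t₂ ∈ 𝓝 t := by
      rw [uIcc]
      exact Icc_mem_nhds ht.1 ht.2
    exact ((he ξ hξ t (Ioo_subset_Icc_self ht)).hasDerivAt hnhds).hasDerivWithinAt
  have hint : IntegrableOn (Function.uncurry e') (uIoc t₁ t₂ ×ˢ uIoc a b) :=
    (he'.integrableOn_compact (isCompact_uIcc.prod isCompact_uIcc)).mono_set
      (prod_mono uIoc_subset_uIcc uIoc_subset_uIcc)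
  rw [intervalIntegral.integral_congr hftc, intervalIntegral_intervalIntegral_swap hint]

theorem semilinear_energy_conserved_general
    (P : ℝ → ℝ) (U V W Q : ℝ → ℝ → ℝ)
    (hP : ContinuousOn P (Set.Ici (0:ℝ)))
    (hUc : ContinuousOn (Function.uncurry U) (Set.Ici (0:ℝ) ×ˢ Set.univ))
    (hVc : ContinuousOn (Function.uncurry V) (Set.Ici (0:ℝ) ×ˢ Set.univ))
    (hWc : ContinuousOn (Function.uncurry W) (Set.Ici (0:ℝ) ×ˢ Set.univ))
    (hQc : ContinuousOn (Function.uncurry Q) (Set.Ici (0:ℝ) ×ˢ Set.univ))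
    (hUper : ∀ t ξ : ℝ, U t (ξ + 1) = U t ξ)
    (hVode : ∀ ξ : ℝ, ∀ t : ℝ, 0 ≤ t → HasDerivWithinAt (fun s => V s ξ)
      (-2 * U t ξ * W t ξ + 2 * W t ξ * V t ξ * P t) (Set.Ici (0:ℝ)) t)
    (hQode : ∀ ξ : ℝ, ∀ t : ℝ, 0 ≤ t → HasDerivWithinAt (fun s => Q s ξ)
      (-2 * W t ξ * Q t ξ * P t) (Set.Ici (0:ℝ)) t)
    (hUAC : ∀ t : ℝ, 0 ≤ t → ∀ a b : ℝ,
      U t b - U t a = ∫ ξ in a..b, W t ξ * Q t ξ) :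
    ∀ t₁ t₂ : ℝ, 0 ≤ t₁ → 0 ≤ t₂ →
      (∫ ξ in (0:ℝ)..1, (Q t₁ ξ - Q t₁ ξ * V t₁ ξ))
        = ∫ ξ in (0:ℝ)..1, (Q t₂ ξ - Q t₂ ξ * V t₂ ξ) := by
  intro t₁ t₂ ht₁ ht₂
  have hsub : uIcc t₁ t₂ ⊆ Ici 0 := fun t ht => le_trans (le_min ht₁ ht₂) ht.1
  have hflux : ∀ t ∈ uIcc t₁ t₂, ∫ ξ in (0:ℝ)..1, 2 * W t ξ * Q t ξ * (U t ξ - P t) = 0 := by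
    intro t ht
    have hWQ : Continuous fun ξ => W t ξ * Q t ξ :=
      (hWc.continuous_uncurry_left (hsub ht)).mul (hQc.continuous_uncurry_left (hsub ht))
    have h := intervalIntegral_two_mul_mul_sub_const_eq_zero hWQ (hUAC t (hsub ht))
      (by simpa using hUper t 0) (P t)
    simpa only [mul_assoc] using h
  have hcont : ContinuousOn (Function.uncurry fun t ξ => 2 * W t ξ * Q t ξ * (U t ξ - P t))
      (uIcc t₁ t₂ ×ˢ uIcc 0 1) := by
    have hPc : ContinuousOn (fun p : ℝ × ℝ => P p.1) (Ici 0 ×ˢ univ) :=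
      hP.comp continuousOn_fst fun p hp => hp.1
    exact (((continuousOn_const.mul hWc).mul hQc).mul (hUc.sub hPc)).mono
      (prod_mono hsub (subset_univ _))
  have hderiv : ∀ ξ ∈ uIcc (0:ℝ) 1, ∀ t ∈ uIcc t₁ t₂,
      HasDerivWithinAt (fun s => Q s ξ - Q s ξ * V s ξ)
        (2 * W t ξ * Q t ξ * (U t ξ - P t)) (uIcc t₁ t₂) t :=
    fun ξ _ t ht => ((hQode ξ t (hsub ht)).energy_density (hVode ξ t (hsub ht))).mono hsub
  have hint : ∀ t ∈ Ici (0:ℝ),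
      IntervalIntegrable (fun ξ => Q t ξ - Q t ξ * V t ξ) volume 0 1 := fun t ht =>
    have hQt := hQc.continuous_uncurry_left ht
    (hQt.sub (hQt.mul (hVc.continuous_uncurry_left ht))).intervalIntegrable 0 1
  symm
  rw [← sub_eq_zero, ← intervalIntegral.integral_sub (hint t₂ ht₂) (hint t₁ ht₁),
    intervalIntegral_sub_eq_integral_integral_deriv hderiv hcont,
    intervalIntegral.integral_congr hflux, intervalIntegral.integral_zero]

/-- **Conservation of the energy of the semilinear characteristic system.** Let `P` be
continuous on `[0,∞)` and let `U, V, W, Q` be `C¹` in `t` (jointly continuous, with the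
stated `t`-derivatives) and 1-periodic in `ξ`, satisfying `V_t = −2UW + 2WVP`,
`W_t = 2UV − U − 2V²P + VP`, `Q_t = −2WQP`. If moreover `ξ ↦ U(t,ξ)` is locally
absolutely continuous with `∂_ξ U = WQ` a.e., then `Ẽ(t) = ∫₀¹ (Q − QV)(t,ξ) dξ` is
constant in time. -/
theorem semilinear_energy_conserved
    (P : ℝ → ℝ) (U V W Q : ℝ → ℝ → ℝ)
    (hP : ContinuousOn P (Set.Ici (0:ℝ)))
    (hUc : ContinuousOn (Function.uncurry U) (Set.Ici (0:ℝ) ×ˢ Set.univ))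
    (hVc : ContinuousOn (Function.uncurry V) (Set.Ici (0:ℝ) ×ˢ Set.univ))
    (hWc : ContinuousOn (Function.uncurry W) (Set.Ici (0:ℝ) ×ˢ Set.univ))
    (hQc : ContinuousOn (Function.uncurry Q) (Set.Ici (0:ℝ) ×ˢ Set.univ))
    (hUper : ∀ t ξ : ℝ, U t (ξ + 1) = U t ξ)
    (hVper : ∀ t ξ : ℝ, V t (ξ + 1) = V t ξ)
    (hWper : ∀ t ξ : ℝ, W t (ξ + 1) = W t ξ)
    (hQper : ∀ t ξ : ℝ, Q t (ξ + 1) = Q t ξ)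
    (hVode : ∀ ξ : ℝ, ∀ t : ℝ, 0 ≤ t → HasDerivWithinAt (fun s => V s ξ)
      (-2 * U t ξ * W t ξ + 2 * W t ξ * V t ξ * P t) (Set.Ici (0:ℝ)) t)
    (hWode : ∀ ξ : ℝ, ∀ t : ℝ, 0 ≤ t → HasDerivWithinAt (fun s => W s ξ)
      (2 * U t ξ * V t ξ - U t ξ - 2 * (V t ξ) ^ 2 * P t + V t ξ * P t)
      (Set.Ici (0:ℝ)) t)
    (hQode : ∀ ξ : ℝ, ∀ t : ℝ, 0 ≤ t → HasDerivWithinAt (fun s => Q s ξ)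
      (-2 * W t ξ * Q t ξ * P t) (Set.Ici (0:ℝ)) t)
    (hUAC : ∀ t : ℝ, 0 ≤ t → ∀ a b : ℝ,
      U t b - U t a = ∫ ξ in a..b, W t ξ * Q t ξ) :
    ∀ t₁ t₂ : ℝ, 0 ≤ t₁ → 0 ≤ t₂ →
      (∫ ξ in (0:ℝ)..1, (Q t₁ ξ - Q t₁ ξ * V t₁ ξ))
        = ∫ ξ in (0:ℝ)..1, (Q t₂ ξ - Q t₂ ξ * V t₂ ξ) :=
  semilinear_energy_conserved_general P U V W Q hP hUc hVc hWc hQc hUper hVode hQode hUAC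
end

section
/- Let φ: [a,b] → [c,d] be absolutely continuous and strictly increasing. Then for every Lebesgue measurable set A ⊆ [a,b], the image φ(A) is Lebesgue measurable and meas(φ(A)) = ∫_A φ'(x) dx, where φ' denotes the a.e. derivative of φ. -/
/-!
On the compact interval `[a,b]` the map `φ` is continuous (it is a primitive) and injective, so
its restriction is a measurable embedding: images of measurable sets are measurable and
`t ↦ meas(φ(t ∩ [a,b]))` is a measure. By the intermediate value theorem it gives `[x,y]` the
mass `φ y - φ x = ∫_x^y φ'`, and `φ' ≥ 0` a.e. by Lebesgue's differentiation theorem because `φ`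
is monotone. So it agrees on closed intervals, hence everywhere, with the measure of density
`φ'` on `[a,b]`.
-/

open MeasureTheory Filter Set

noncomputable section

theorem MeasurableEmbedding.map_comap_domRestrict_apply {α β : Type*} [MeasurableSpace α]
    [MeasurableSpace β] {f : α → β} {s : Set α} (hf : MeasurableEmbedding (s.domRestrict f))
    (μ : Measure β) {t : Set α} (ht : MeasurableSet t) :
    (μ.comap (s.domRestrict f)).map (↑) t = μ (f '' (s ∩ t)) := by
  rw [Measure.map_apply measurable_subtype_coe ht, hf.comap_apply, domRestrict_eq, image_comp,
    Subtype.image_preimage_coe]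

theorem IsCompact.measurableEmbedding_domRestrict {X Y : Type*} [TopologicalSpace X]
    [MeasurableSpace X] [BorelSpace X] [TopologicalSpace Y] [T2Space Y] [MeasurableSpace Y]
    [BorelSpace Y] {f : X → Y} {K : Set X} (hK : IsCompact K) (hf : ContinuousOn f K)
    (hinj : InjOn f K) : MeasurableEmbedding (K.domRestrict f) :=
  have : CompactSpace K := isCompact_iff_compactSpace.mp hK
  (hf.domRestrict.isClosedEmbedding hinj.injective).measurableEmbedding

section Primitive

variable {f φ : ℝ → ℝ} {a b : ℝ}

theorem continuousOn_Icc_of_sub_eq_integral (hab : a ≤ b) (hf : IntervalIntegrable f volume a b)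
    (hφ : ∀ x ∈ Icc a b, φ x - φ a = ∫ z in a..x, f z) : ContinuousOn φ (Icc a b) := by
  have hF := intervalIntegral.continuousOn_primitive_interval' hf left_mem_uIcc
  rw [uIcc_of_le hab] at hF
  exact (hF.add (continuousOn_const (c := φ a))).congr fun x hx => by
    simp only [Pi.add_apply, ← hφ x hx, sub_add_cancel]

theorem sub_eq_integral_of_sub_left_eq_integral (hf : IntervalIntegrable f volume a b)
    (hφ : ∀ x ∈ Icc a b, φ x - φ a = ∫ z in a..x, f z) {x y : ℝ} (hx : x ∈ Icc a b)
    (hy : y ∈ Icc a b) : φ y - φ x = ∫ z in x..y, f z := by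
  have hab : a ≤ b := hx.1.trans hx.2
  have hint : ∀ z ∈ Icc a b, IntervalIntegrable f volume a z := fun z hz =>
    hf.mono_set (uIcc_subset_uIcc left_mem_uIcc (by rwa [uIcc_of_le hab]))
  rw [← intervalIntegral.integral_interval_sub_left (hint y hy) (hint x hx), ← hφ x hx, ← hφ y hy]
  ring

theorem ae_nonneg_of_monotoneOn_of_sub_eq_integral (hf : IntervalIntegrable f volume a b)
    (hφ : ∀ x ∈ Icc a b, φ x - φ a = ∫ z in a..x, f z) (hmono : MonotoneOn φ (Icc a b)) :
    ∀ᵐ x ∂volume.restrict (Icc a b), 0 ≤ f x := by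
  have hF : MonotoneOn (fun x => ∫ z in a..x, f z) (Icc a b) := fun y hy z hz hyz => by
    simp only [← hφ y hy, ← hφ z hz]
    linarith [hmono hy hz hyz]
  rw [← Measure.restrict_congr_set Ioo_ae_eq_Icc, ae_restrict_iff' measurableSet_Ioo]
  filter_upwards [hf.ae_hasDerivAt_integral] with x hx hxI
  have hab : a ≤ b := hxI.1.le.trans hxI.2.le
  have hacc : AccPt x (𝓟 (Icc a b)) := by
    simpa using (PerfectSpace.univ_preperfect x (mem_univ x)).nhds_inter (Icc_mem_nhds hxI.1 hxI.2)
  refine (hx ?_ a left_mem_uIcc).hasDerivWithinAt.nonneg_of_monotoneOn hacc hF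
  rw [uIcc_of_le hab]
  exact Ioo_subset_Icc_self hxI

theorem volume_image_Icc_eq_lintegral (hf : IntervalIntegrable f volume a b)
    (hφ : ∀ x ∈ Icc a b, φ x - φ a = ∫ z in a..x, f z) (hmono : MonotoneOn φ (Icc a b))
    {x y : ℝ} (hx : x ∈ Icc a b) (hy : y ∈ Icc a b) (hxy : x ≤ y) :
    volume (φ '' Icc x y) = ∫⁻ z in Icc x y, ENNReal.ofReal (f z) := by
  have hab : a ≤ b := hx.1.trans hx.2
  have hsub : Icc x y ⊆ Icc a b := Icc_subset_Icc hx.1 hy.2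
  have hcont := continuousOn_Icc_of_sub_eq_integral hab hf hφ
  have hfxy : IntegrableOn f (Icc x y) :=
    ((intervalIntegrable_iff_integrableOn_Icc_of_le hab).mp hf).mono_set hsub
  rw [(hcont.mono hsub).image_Icc_of_monotoneOn hxy (hmono.mono hsub), Real.volume_Icc,
    sub_eq_integral_of_sub_left_eq_integral hf hφ hx hy, intervalIntegral.integral_of_le hxy,
    ← integral_Icc_eq_integral_Ioc, ofReal_integral_eq_lintegral_ofReal hfxy
      (ae_restrict_of_ae_restrict_of_subset hsub
        (ae_nonneg_of_monotoneOn_of_sub_eq_integral hf hφ hmono))]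

theorem map_comap_domRestrict_eq_withDensity (hab : a ≤ b) (hf : IntervalIntegrable f volume a b)
    (hφ : ∀ x ∈ Icc a b, φ x - φ a = ∫ z in a..x, f z) (hmono : StrictMonoOn φ (Icc a b)) :
    (volume.comap ((Icc a b).domRestrict φ)).map (↑) =
      (volume.restrict (Icc a b)).withDensity fun x => ENNReal.ofReal (f x) := by
  have hemb := isCompact_Icc.measurableEmbedding_domRestrict
    (continuousOn_Icc_of_sub_eq_integral hab hf hφ) hmono.injOn
  have : IsFiniteMeasure ((volume.restrict (Icc a b)).withDensity fun x => ENNReal.ofReal (f x)) :=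
    isFiniteMeasure_withDensity_ofReal
      ((intervalIntegrable_iff_integrableOn_Icc_of_le hab).mp hf).hasFiniteIntegral
  refine (Measure.ext_of_Icc _ _ fun u v _ => ?_).symm
  rw [withDensity_apply _ measurableSet_Icc, Measure.restrict_restrict measurableSet_Icc,
    hemb.map_comap_domRestrict_apply _ measurableSet_Icc, Icc_inter_Icc, Icc_inter_Icc,
    max_comm u a, min_comm v b]
  by_cases h : max a u ≤ min b v
  · exact (volume_image_Icc_eq_lintegral hf hφ hmono.monotoneOn
      ⟨le_max_left a u, h.trans (min_le_left b v)⟩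
      ⟨(le_max_left a u).trans h, min_le_left b v⟩ h).symm
  · simp [Icc_eq_empty h]

end Primitive

theorem measure_image_eq_integral_deriv_general
    (a b : ℝ) (hab : a ≤ b) (φ φ' : ℝ → ℝ)
    (hmono : StrictMonoOn φ (Set.Icc a b))
    (hint : IntervalIntegrable φ' volume a b)
    (hAC : ∀ x ∈ Set.Icc a b, φ x - φ a = ∫ z in a..x, φ' z) :
    ∀ A : Set ℝ, A ⊆ Set.Icc a b → MeasurableSet A →
      MeasurableSet (φ '' A) ∧
      volume (φ '' A) = ENNReal.ofReal (∫ x in A, φ' x) := by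
  intro A hA hAm
  have hemb := isCompact_Icc.measurableEmbedding_domRestrict
    (continuousOn_Icc_of_sub_eq_integral hab hint hAC) hmono.injOn
  have himage : (Icc a b).domRestrict φ '' ((↑) ⁻¹' A) = φ '' A := by
    rw [domRestrict_eq, image_comp, Subtype.image_preimage_coe, inter_eq_right.2 hA]
  refine ⟨himage ▸ hemb.measurableSet_image' (measurable_subtype_coe hAm), ?_⟩
  have hvol := congrArg (· A) (map_comap_domRestrict_eq_withDensity hab hint hAC hmono)
  rw [hemb.map_comap_domRestrict_apply _ hAm, inter_eq_right.2 hA, withDensity_apply _ hAm,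
    Measure.restrict_restrict hAm, inter_eq_left.2 hA] at hvol
  rw [hvol, ofReal_integral_eq_lintegral_ofReal
    (((intervalIntegrable_iff_integrableOn_Icc_of_le hab).mp hint).mono_set hA)
    (ae_restrict_of_ae_restrict_of_subset hA
      (ae_nonneg_of_monotoneOn_of_sub_eq_integral hint hAC hmono.monotoneOn))]

/-- **Area formula for strictly increasing absolutely continuous maps.** If
`φ : [a,b] → [c,d]` is absolutely continuous (with a.e. derivative `φ'`, encoded by the
integral representation with integrable `φ'`) and strictly increasing, then for every
Lebesgue measurable `A ⊆ [a,b]` the image `φ(A)` is Lebesgue measurable and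
`meas(φ(A)) = ∫_A φ'`. -/
theorem measure_image_eq_integral_deriv
    (a b c d : ℝ) (hab : a ≤ b) (φ φ' : ℝ → ℝ)
    (hmaps : Set.MapsTo φ (Set.Icc a b) (Set.Icc c d))
    (hmono : StrictMonoOn φ (Set.Icc a b))
    (hint : IntervalIntegrable φ' volume a b)
    (hAC : ∀ x ∈ Set.Icc a b, φ x - φ a = ∫ z in a..x, φ' z) :
    ∀ A : Set ℝ, A ⊆ Set.Icc a b → MeasurableSet A →
      MeasurableSet (φ '' A) ∧
      volume (φ '' A) = ENNReal.ofReal (∫ x in A, φ' x) :=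
  measure_image_eq_integral_deriv_general a b hab φ φ' hmono hint hAC
end
end

section
/- Let u: ℝ → ℝ be 1-periodic, locally absolutely continuous with a.e. derivative uₓ ∈ L²(0,1), and set h := ∫₀¹ uₓ²(z) dz. For β ∈ ℝ let y(β) be implicitly defined by y(β) + ∫₀^{y(β)} uₓ²(z) dz = (1+h)β. Then the map β ↦ y(β) is well defined, strictly increasing, and Lipschitz continuous with constant 1 + h, and the map β ↦ u(y(β)) is Lipschitz continuous with constant (1+h)/2. -/
open MeasureTheory Filter Set

noncomputable section

/-- A 1-periodic function interval-integrable on `[0,1]` is interval integrable on any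
interval. -/
theorem periodic_intervalIntegrable {g : ℝ → ℝ} (hp : Function.Periodic g 1)
    (hint : IntervalIntegrable g volume 0 1) :
    ∀ a b : ℝ, IntervalIntegrable g volume a b := by
  have hunit : ∀ n : ℤ, IntervalIntegrable g volume (-n) (1 - n) := by
    intro n
    have h1 := hint.comp_add_right (n : ℝ)
    have h2 : (fun x : ℝ => g (x + n)) = g := by
      funext x
      have := (hp.zsmul n) x
      simpa using this
    rw [h2] at h1
    simpa using h1
  have hN : ∀ N : ℕ, IntervalIntegrable g volume (-(N : ℝ)) (N : ℝ) := by
    intro N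
    induction N with
    | zero => simp
    | succ k ih =>
      have hl : IntervalIntegrable g volume (-(k : ℝ) - 1) (-(k : ℝ)) := by
        have h0 := hunit (k + 1)
        push_cast at h0
        have e1 : -((k:ℝ) + 1) = -(k:ℝ) - 1 := by ring
        have e2 : (1:ℝ) - ((k:ℝ) + 1) = -(k:ℝ) := by ring
        rw [e1, e2] at h0
        exact h0
      have hr : IntervalIntegrable g volume (k : ℝ) ((k : ℝ) + 1) := by
        have h0 := hunit (-k)
        push_cast at h0
        have e1 : -(-(k:ℝ)) = (k:ℝ) := by ring
        have e2 : (1:ℝ) - -(k:ℝ) = (k:ℝ) + 1 := by ring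
        rw [e1, e2] at h0
        exact h0
      have h0 := (hl.trans ih).trans hr
      have e1 : -((k:ℝ) + 1) = -(k:ℝ) - 1 := by ring
      push_cast
      rw [e1]
      exact h0
  intro a b
  obtain ⟨N, hNa, hNb⟩ : ∃ N : ℕ, |a| ≤ N ∧ |b| ≤ N := by
    obtain ⟨N, hN⟩ := exists_nat_ge (max |a| |b|)
    exact ⟨N, le_trans (le_max_left _ _) hN, le_trans (le_max_right _ _) hN⟩
  refine (hN N).mono_set ?_
  rw [uIcc_of_le (by linarith [abs_nonneg a, (abs_le.mp hNa).1] : -(N:ℝ) ≤ (N:ℝ))]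
  intro x hx
  rcases abs_le.mp hNa with ⟨ha1, ha2⟩
  rcases abs_le.mp hNb with ⟨hb1, hb2⟩
  rcases mem_uIcc.mp hx with ⟨h1, h2⟩ | ⟨h1, h2⟩ <;> constructor <;> linarith

/-- **Lipschitz regularity in the adapted variable `β`.** Let `u` be 1-periodic,
locally absolutely continuous with (1-periodic) a.e. derivative `ux ∈ L²(0,1)`, and set
`h = ∫₀¹ ux²`. Then for each `β` the implicit equation
`y(β) + ∫₀^{y(β)} ux²(z) dz = (1+h)β` has a unique solution, the map `β ↦ y(β)` is
strictly increasing and Lipschitz with constant `1 + h`, and `β ↦ u(y(β))` is Lipschitz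
with constant `(1+h)/2`. -/
theorem adapted_variable_lipschitz
    (u ux : ℝ → ℝ)
    (hper : ∀ x : ℝ, u (x + 1) = u x)
    (hper' : ∀ x : ℝ, ux (x + 1) = ux x)
    (hAC : ∀ a b : ℝ, u b - u a = ∫ z in a..b, ux z)
    (hint : IntervalIntegrable (fun z => (ux z) ^ 2) volume 0 1) :
    (∀ β : ℝ, ∃! x : ℝ,
      x + (∫ z in (0:ℝ)..x, (ux z) ^ 2) = (1 + ∫ z in (0:ℝ)..1, (ux z) ^ 2) * β) ∧
    ∃ y : ℝ → ℝ,
      (∀ β : ℝ, y β + (∫ z in (0:ℝ)..(y β), (ux z) ^ 2)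
          = (1 + ∫ z in (0:ℝ)..1, (ux z) ^ 2) * β) ∧
      StrictMono y ∧
      LipschitzWith (Real.toNNReal (1 + ∫ z in (0:ℝ)..1, (ux z) ^ 2)) y ∧
      LipschitzWith (Real.toNNReal ((1 + ∫ z in (0:ℝ)..1, (ux z) ^ 2) / 2))
        (fun β => u (y β)) := by
  set g : ℝ → ℝ := fun z => (ux z) ^ 2 with hg
  have hp : Function.Periodic g 1 := fun x => by simp [hg, hper' x]
  have hgint : ∀ a b : ℝ, IntervalIntegrable g volume a b :=
    periodic_intervalIntegrable hp hint
  set h : ℝ := ∫ z in (0:ℝ)..1, g z with hh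
  have hh0 : 0 ≤ h := intervalIntegral.integral_nonneg zero_le_one (fun x _ => sq_nonneg _)
  have h1h : (0:ℝ) < 1 + h := by linarith
  set F : ℝ → ℝ := fun x => x + ∫ z in (0:ℝ)..x, g z with hF
  -- difference formula
  have hdiff : ∀ x₁ x₂ : ℝ, F x₂ - F x₁ = (x₂ - x₁) + ∫ z in x₁..x₂, g z := by
    intro x₁ x₂
    have := intervalIntegral.integral_add_adjacent_intervals (hgint 0 x₁) (hgint x₁ x₂)
    simp only [hF]
    rw [← this]
    ring
  have hmono : StrictMono F := by
    intro x₁ x₂ hx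
    have hnn : 0 ≤ ∫ z in x₁..x₂, g z :=
      intervalIntegral.integral_nonneg hx.le (fun x _ => sq_nonneg _)
    have := hdiff x₁ x₂
    linarith
  have hcont : Continuous F :=
    continuous_id.add (intervalIntegral.continuous_primitive hgint 0)
  -- F at integers
  have hFn : ∀ n : ℤ, F n = n * (1 + h) := by
    intro n
    have hz := hp.intervalIntegral_add_zsmul_eq n 0 hgint
    simp only [zero_add] at hz
    have hn1 : (n : ℝ) • (1:ℝ) = (n : ℝ) := by simp
    have : (∫ z in (0:ℝ)..(n:ℝ), g z) = n * h := by
      rw [← hn1]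
      push_cast at hz ⊢
      rw [show ((n:ℝ) • (1:ℝ)) = ((n:ℤ) • (1:ℝ)) by simp] at *
      rw [hz]
      simp [hh]
    simp only [hF, this]
    ring
  -- existence and uniqueness of x with F x = (1+h) β
  have hexu : ∀ β : ℝ, ∃! x : ℝ, F x = (1 + h) * β := by
    intro β
    have hlo : F (⌊β⌋ : ℝ) ≤ (1 + h) * β := by
      rw [hFn ⌊β⌋]
      have := Int.floor_le β
      nlinarith
    have hhi : (1 + h) * β ≤ F ((⌊β⌋ : ℝ) + 1) := by
      have : ((⌊β⌋ : ℝ) + 1) = ((⌊β⌋ + 1 : ℤ) : ℝ) := by push_cast; ring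
      rw [this, hFn (⌊β⌋ + 1)]
      have := Int.lt_floor_add_one β
      push_cast
      nlinarith
    have hIVT := intermediate_value_Icc (by linarith : ((⌊β⌋:ℝ)) ≤ (⌊β⌋:ℝ) + 1)
      hcont.continuousOn
    obtain ⟨x, _, hx⟩ := hIVT ⟨hlo, hhi⟩
    exact ⟨x, hx, fun x' hx' => hmono.injective (hx'.trans hx.symm)⟩
  -- the function y
  choose y hy using fun β => (hexu β).exists
  have hyuniq : ∀ β x, F x = (1 + h) * β → x = y β := fun β x hx =>
    (hexu β).unique hx (hy β)
  have hymono : StrictMono y := by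
    intro β₁ β₂ hb
    have : F (y β₁) < F (y β₂) := by
      rw [hy β₁, hy β₂]
      exact (mul_lt_mul_iff_right₀ h1h).mpr hb
    exact hmono.lt_iff_lt.mp this
  -- key estimate
  have hkey : ∀ β₁ β₂ : ℝ, β₁ ≤ β₂ →
      y β₂ - y β₁ + (∫ z in y β₁..y β₂, g z) = (1 + h) * (β₂ - β₁) := by
    intro β₁ β₂ _
    have := hdiff (y β₁) (y β₂)
    rw [hy β₁, hy β₂] at this
    linarith [this]
  have hLip1 : LipschitzWith (Real.toNNReal (1 + h)) y := by
    apply LipschitzWith.of_dist_le_mul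
    intro β₁ β₂
    wlog hb : β₂ ≤ β₁ generalizing β₁ β₂
    · rw [dist_comm, dist_comm β₁ β₂]; exact this β₂ β₁ (le_of_not_ge hb)
    have hyb : y β₂ ≤ y β₁ := hymono.monotone hb
    have hk := hkey β₂ β₁ hb
    have hnn : 0 ≤ ∫ z in y β₂..y β₁, g z :=
      intervalIntegral.integral_nonneg hyb (fun x _ => sq_nonneg _)
    rw [Real.dist_eq, Real.dist_eq, abs_of_nonneg (by linarith : (0:ℝ) ≤ y β₁ - y β₂),
      abs_of_nonneg (by linarith : (0:ℝ) ≤ β₁ - β₂), Real.coe_toNNReal _ h1h.le]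
    nlinarith
  have hLip2 : LipschitzWith (Real.toNNReal ((1 + h) / 2)) (fun β => u (y β)) := by
    apply LipschitzWith.of_dist_le_mul
    intro β₁ β₂
    wlog hb : β₂ ≤ β₁ generalizing β₁ β₂
    · rw [dist_comm, dist_comm β₁ β₂]; exact this β₂ β₁ (le_of_not_ge hb)
    have hyb : y β₂ ≤ y β₁ := hymono.monotone hb
    have hk := hkey β₂ β₁ hb
    rw [Real.coe_toNNReal _ (by positivity : (0:ℝ) ≤ (1+h)/2)]
    simp only [Real.dist_eq]
    rw [abs_of_nonneg (by linarith : (0:ℝ) ≤ β₁ - β₂)]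
    have hud : u (y β₁) - u (y β₂) = ∫ z in y β₂..y β₁, ux z := hAC _ _
    by_cases hi : IntervalIntegrable ux volume (y β₂) (y β₁)
    · have h1 : |∫ z in y β₂..y β₁, ux z| ≤ ∫ z in y β₂..y β₁, |ux z| :=
        intervalIntegral.abs_integral_le_integral_abs hyb
      have h2 : (∫ z in y β₂..y β₁, |ux z|) ≤ ∫ z in y β₂..y β₁, (1 + g z) / 2 := by
        apply intervalIntegral.integral_mono_on hyb hi.abs
        · exact ((intervalIntegrable_const (c := (1:ℝ))).add (hgint _ _)).div_const 2
        · intro x _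
          have : (|ux x| - 1)^2 ≥ 0 := sq_nonneg _
          have habs : |ux x| ^ 2 = g x := by rw [sq_abs]
          nlinarith [sq_nonneg (|ux x| - 1), sq_abs (ux x)]
      have h3 : (∫ z in y β₂..y β₁, (1 + g z) / 2)
          = ((y β₁ - y β₂) + ∫ z in y β₂..y β₁, g z) / 2 := by
        rw [intervalIntegral.integral_div, intervalIntegral.integral_add
          (intervalIntegrable_const (c := (1:ℝ))) (hgint _ _)]
        simp
      calc |u (y β₁) - u (y β₂)| = |∫ z in y β₂..y β₁, ux z| := by rw [hud]
        _ ≤ ∫ z in y β₂..y β₁, |ux z| := h1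
        _ ≤ ((y β₁ - y β₂) + ∫ z in y β₂..y β₁, g z) / 2 := by rw [← h3]; exact h2
        _ = (1 + h) / 2 * (β₁ - β₂) := by rw [hk]; ring
    · have : (∫ z in y β₂..y β₁, ux z) = 0 := intervalIntegral.integral_undef hi
      rw [hud, this]
      simp only [abs_zero]
      have hd : 0 ≤ β₁ - β₂ := by linarith
      have hc : (0:ℝ) ≤ (1 + h) / 2 := by positivity
      exact mul_nonneg hc hd
  refine ⟨fun β => hexu β, y, fun β => hy β, hymono, hLip1, hLip2⟩
end
end
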